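/- Let ρ > 0 and set l = 2(ρ−1). The function v*_ρ(y) := −2ρ log(1+|y|²) + log(8ρ) is a C² solution of Δv(y) + (1+|y|²)^l e^{v(y)} = 0 on ℝ²; moreover y ↦ (1+|y|²)^l e^{v*_ρ(y)} is integrable on ℝ² and (1/(2π)) ∫_{ℝ²} (1+|y|²)^l e^{v*_ρ(y)} dy = 4ρ = 4 + 2l. -/

import Mathlib

/-!
For a radial function `c · log (1 + |y|²)` the Laplacian is `4c / (1 + |y|²)²`, and the choice
`l = 2(ρ - 1)` makes the weight `(1 + |y|²)^l e^{v*_ρ}` collapse to `8ρ / (1 + |y|²)²`, so that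
`v*_ρ` (with `c = -2ρ`) solves the equation. In polar coordinates the total mass is
`8ρ · 2π ∫₀^∞ r (1 + r²)⁻² dr = 8ρ π`, since `-1 / (2(1 + r²))` is an antiderivative.
-/

open MeasureTheory Real

/-- The Euclidean Laplacian on `ℝ²`: the sum of the two pure second partial
derivatives in the standard coordinate directions. -/
noncomputable def planeLaplacian (v : EuclideanSpace ℝ (Fin 2) → ℝ)
    (y : EuclideanSpace ℝ (Fin 2)) : ℝ :=
  ∑ i : Fin 2,
    fderiv ℝ (fun z => fderiv ℝ v z (EuclideanSpace.single i 1)) y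
      (EuclideanSpace.single i 1)

open scoped RealInnerProductSpace Topology
open Set Filter

section InnerProductSpace

variable {E : Type*} [NormedAddCommGroup E] [InnerProductSpace ℝ E]

theorem hasFDerivAt_one_add_norm_sq (y : E) :
    HasFDerivAt (fun z : E => 1 + ‖z‖ ^ 2) (2 • innerSL ℝ y) y := by
  simpa using ((hasFDerivAt_id y).norm_sq).const_add 1

theorem contDiff_log_one_add_norm_sq (c d : ℝ) {n : WithTop ℕ∞} :
    ContDiff ℝ n (fun z : E => c * log (1 + ‖z‖ ^ 2) + d) :=
  (contDiff_const.mul ((contDiff_const.add (contDiff_norm_sq ℝ)).log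
    fun z => (zero_lt_one_add_norm_sq z).ne')).add contDiff_const

theorem hasFDerivAt_log_one_add_norm_sq (c d : ℝ) (y : E) :
    HasFDerivAt (fun z : E => c * log (1 + ‖z‖ ^ 2) + d)
      ((2 * c / (1 + ‖y‖ ^ 2)) • innerSL ℝ y) y := by
  have hlog := (hasFDerivAt_one_add_norm_sq y).log (zero_lt_one_add_norm_sq y).ne'
  refine ((hlog.const_mul c).add_const d).congr_fderiv ?_
  ext v
  simp only [smul_apply, smul_eq_mul, nsmul_eq_mul, Nat.cast_ofNat]
  ring

theorem fderiv_log_one_add_norm_sq_apply (c d : ℝ) (z v : E) :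
    fderiv ℝ (fun w : E => c * log (1 + ‖w‖ ^ 2) + d) z v
      = 2 * c * ⟪z, v⟫ / (1 + ‖z‖ ^ 2) := by
  rw [(hasFDerivAt_log_one_add_norm_sq c d z).fderiv]
  simp only [smul_apply, innerSL_apply_apply, smul_eq_mul]
  ring

theorem fderiv_fderiv_log_one_add_norm_sq_apply (c d : ℝ) (y v : E) :
    fderiv ℝ (fun z => fderiv ℝ (fun w : E => c * log (1 + ‖w‖ ^ 2) + d) z v) y v
      = 2 * c * (‖v‖ ^ 2 * (1 + ‖y‖ ^ 2) - 2 * ⟪y, v⟫ ^ 2) / (1 + ‖y‖ ^ 2) ^ 2 := by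
  simp_rw [fderiv_log_one_add_norm_sq_apply, div_eq_mul_inv]
  have hinv := (hasDerivAt_inv (zero_lt_one_add_norm_sq y).ne').comp_hasFDerivAt y
    (hasFDerivAt_one_add_norm_sq y)
  have h : HasFDerivAt (fun z : E => 2 * c * ⟪z, v⟫ * (1 + ‖z‖ ^ 2)⁻¹) _ y :=
    (((hasFDerivAt_id y).inner ℝ (hasFDerivAt_const v y)).const_mul (2 * c)).mul hinv
  rw [h.fderiv]
  simp only [id_eq, add_apply, smul_apply, coe_innerSL_apply, smul_eq_mul, nsmul_eq_mul,
    Nat.cast_ofNat, ContinuousLinearMap.comp_apply, ContinuousLinearMap.prod_apply,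
    ContinuousLinearMap.id_apply, zero_apply, fderivInnerCLM_apply, inner_zero_right,
    real_inner_self_eq_norm_sq, zero_add]
  field_simp
  ring

end InnerProductSpace

local notation "E2" => EuclideanSpace ℝ (Fin 2)

theorem planeLaplacian_log_one_add_norm_sq (c d : ℝ) (y : E2) :
    planeLaplacian (fun z => c * log (1 + ‖z‖ ^ 2) + d) y = 4 * c / (1 + ‖y‖ ^ 2) ^ 2 := by
  have hy : ‖y‖ ^ 2 = y 0 ^ 2 + y 1 ^ 2 := by
    simp [EuclideanSpace.norm_sq_eq, Fin.sum_univ_two]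
  simp only [planeLaplacian, Fin.sum_univ_two, fderiv_fderiv_log_one_add_norm_sq_apply,
    PiLp.norm_single, EuclideanSpace.inner_single_right, norm_one, one_pow, conj_trivial, hy]
  field_simp
  ring

theorem rpow_mul_exp_log_eq_mul_inv_sq {ρ l q : ℝ} (hρ : 0 < ρ) (hl : l = 2 * (ρ - 1))
    (hq : 0 < q) :
    q ^ l * exp (-2 * ρ * log q + log (8 * ρ)) = 8 * ρ * (q ^ 2)⁻¹ := by
  rw [exp_add, exp_log (by positivity), mul_comm (-2 * ρ), ← rpow_def_of_pos hq, ← mul_assoc,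
    ← rpow_add hq, hl, show 2 * (ρ - 1) + -2 * ρ = -(2 : ℕ) by push_cast; ring, rpow_neg hq.le,
    rpow_natCast]
  ring

theorem integral_Ioi_mul_inv_one_add_sq_sq :
    ∫ r in Ioi (0 : ℝ), r * ((1 + r ^ 2) ^ 2)⁻¹ = 1 / 2 := by
  have hderiv : ∀ r ∈ Ici (0 : ℝ),
      HasDerivAt (fun r => -(1 + r ^ 2)⁻¹ / 2) (r * ((1 + r ^ 2) ^ 2)⁻¹) r := fun r _ => by
    have hinv := ((hasDerivAt_pow 2 r).const_add 1).inv (by positivity)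
    refine (hinv.neg.div_const 2).congr_deriv ?_
    field_simp
    ring
  have hlim : Tendsto (fun r : ℝ => -(1 + r ^ 2)⁻¹ / 2) atTop (𝓝 0) := by
    simpa using (tendsto_inv_atTop_zero.comp
      (tendsto_atTop_add_const_left _ 1 (tendsto_pow_atTop (α := ℝ) two_ne_zero))).neg.div_const 2
  rw [integral_Ioi_of_hasDerivAt_of_nonneg' hderiv
    (fun r hr => mul_nonneg (le_of_lt hr) (by positivity)) hlim]
  norm_num

theorem integral_inv_one_add_norm_sq_sq : ∫ y : E2, ((1 + ‖y‖ ^ 2) ^ 2)⁻¹ = π := by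
  rw [integral_fun_norm_addHaar volume (fun r => ((1 + r ^ 2) ^ 2)⁻¹), finrank_euclideanSpace_fin,
    measureReal_def, EuclideanSpace.volume_ball_fin_two]
  simp only [ENNReal.ofReal_one, one_pow, one_mul, ENNReal.toReal_ofReal pi_nonneg,
    Nat.add_one_sub_one, pow_one, smul_eq_mul, integral_Ioi_mul_inv_one_add_sq_sq, nsmul_eq_mul,
    Nat.cast_ofNat]
  ring

theorem integrable_inv_one_add_norm_sq_sq {E : Type*} [NormedAddCommGroup E] [NormedSpace ℝ E]
    [FiniteDimensional ℝ E] [MeasurableSpace E] [BorelSpace E] (μ : Measure E)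
    [μ.IsAddHaarMeasure] (hE : Module.finrank ℝ E < 4) :
    Integrable (fun y : E => ((1 + ‖y‖ ^ 2) ^ 2)⁻¹) μ := by
  refine (integrable_rpow_neg_one_add_norm_sq (μ := μ) (r := 4) (by exact_mod_cast hE)).congr
    (Eventually.of_forall fun y => ?_)
  dsimp only
  rw [show -(4 : ℝ) / 2 = -(2 : ℕ) by norm_num, rpow_neg (by positivity), rpow_natCast]

/-- For `ρ > 0` and `l = 2(ρ-1)`, the function
`v*_ρ(y) = -2ρ log(1+|y|²) + log(8ρ)` is a `C²` solution of
`Δv + (1+|y|²)^l e^v = 0` on `ℝ²`, the weight `(1+|y|²)^l e^{v*_ρ}` is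
integrable, and `(1/2π) ∫ (1+|y|²)^l e^{v*_ρ} = 4ρ = 4 + 2l`. -/
theorem special_solution (ρ l : ℝ) (hρ : 0 < ρ) (hl : l = 2 * (ρ - 1)) :
    ContDiff ℝ 2 (fun y : EuclideanSpace ℝ (Fin 2) =>
        -2 * ρ * Real.log (1 + ‖y‖ ^ 2) + Real.log (8 * ρ)) ∧
    (∀ y : EuclideanSpace ℝ (Fin 2),
      planeLaplacian (fun z => -2 * ρ * Real.log (1 + ‖z‖ ^ 2) + Real.log (8 * ρ)) y
        + (1 + ‖y‖ ^ 2) ^ l *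
          Real.exp (-2 * ρ * Real.log (1 + ‖y‖ ^ 2) + Real.log (8 * ρ)) = 0) ∧
    Integrable (fun y : EuclideanSpace ℝ (Fin 2) =>
      (1 + ‖y‖ ^ 2) ^ l *
        Real.exp (-2 * ρ * Real.log (1 + ‖y‖ ^ 2) + Real.log (8 * ρ))) ∧
    (1 / (2 * Real.pi)) * (∫ y : EuclideanSpace ℝ (Fin 2),
      (1 + ‖y‖ ^ 2) ^ l *
        Real.exp (-2 * ρ * Real.log (1 + ‖y‖ ^ 2) + Real.log (8 * ρ))) = 4 * ρ ∧
    4 * ρ = 4 + 2 * l := by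
  have hweight :
      (fun y : E2 => (1 + ‖y‖ ^ 2) ^ l * exp (-2 * ρ * log (1 + ‖y‖ ^ 2) + log (8 * ρ)))
        = fun y => 8 * ρ * ((1 + ‖y‖ ^ 2) ^ 2)⁻¹ :=
    funext fun y => rpow_mul_exp_log_eq_mul_inv_sq hρ hl (zero_lt_one_add_norm_sq y)
  refine ⟨contDiff_log_one_add_norm_sq _ _, fun y => ?_, ?_, ?_, by rw [hl]; ring⟩
  · rw [planeLaplacian_log_one_add_norm_sq, congrFun hweight y]
    ring
  · rw [hweight]
    exact (integrable_inv_one_add_norm_sq_sq volume (by simp)).const_mul _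
  · rw [hweight, integral_const_mul, integral_inv_one_add_norm_sq_sq]
    field_simp
    norm_num
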